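/- arXiv:1906.07684 — 3 statements merged into one kernel-verified Lean document; each statement's English description precedes it below -/
import Mathlib

section
/- Let X be a real p×k matrix (p ≥ k) of full column rank and let Q_X = X(XᵀX)^{-1/2} be the orthogonal polar factor of X. Then for every Q ∈ ℝ^{p×k} with QᵀQ = I_k, the Frobenius norm satisfies ‖X − Q_X‖_F ≤ ‖X − Q‖_F; that is, Q_X is a closest point to X in the Stiefel manifold V(k,p) in Frobenius norm. -/
open Matrix

/-- The Frobenius norm of a real matrix: `‖A‖_F = (Σ_{i,j} A_{ij}²)^{1/2}`. -/
noncomputable def frobNorm {m n : ℕ} (A : Matrix (Fin m) (Fin n) ℝ) : ℝ :=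
  Real.sqrt (∑ i, ∑ j, (A i j) ^ 2)

/-- The positive semidefinite square root of a positive semidefinite matrix (the definition
`Matrix.PosSemidef.sqrt` of the older Mathlib, since removed). -/
noncomputable def Matrix.PosSemidef.sqrt {n 𝕜 : Type*} [Fintype n] [RCLike 𝕜] [PartialOrder 𝕜] [DecidableEq n]
    {A : Matrix n n 𝕜} (hA : A.PosSemidef) : Matrix n n 𝕜 :=
  hA.1.eigenvectorUnitary.1 * diagonal ((↑) ∘ Real.sqrt ∘ hA.1.eigenvalues) *
    (star hA.1.eigenvectorUnitary : Matrix n n 𝕜)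

lemma Matrix.PosSemidef.posSemidef_sqrt {k : ℕ} {A : Matrix (Fin k) (Fin k) ℝ}
    (hA : A.PosSemidef) : hA.sqrt.PosSemidef := by
  have := (Matrix.PosSemidef.diagonal (d := ((↑) ∘ Real.sqrt ∘ hA.1.eigenvalues : Fin k → ℝ))
    (fun i => by simp [Real.sqrt_nonneg])).mul_mul_conjTranspose_same
    (hA.1.eigenvectorUnitary : Matrix (Fin k) (Fin k) ℝ)
  rw [Matrix.PosSemidef.sqrt, Matrix.star_eq_conjTranspose]
  exact this

lemma Matrix.PosSemidef.sqrt_mul_self {k : ℕ} {A : Matrix (Fin k) (Fin k) ℝ}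
    (hA : A.PosSemidef) : hA.sqrt * hA.sqrt = A := by
  simp only [Matrix.PosSemidef.sqrt]
  set U := hA.1.eigenvectorUnitary
  have hU : (star U : Matrix (Fin k) (Fin k) ℝ) * (U : Matrix (Fin k) (Fin k) ℝ) = 1 :=
    Unitary.coe_star_mul_self U
  rw [show (U : Matrix (Fin k) (Fin k) ℝ) * diagonal ((RCLike.ofReal : ℝ → ℝ) ∘ Real.sqrt ∘ hA.1.eigenvalues) *
      (star U : Matrix (Fin k) (Fin k) ℝ) * ((U : Matrix (Fin k) (Fin k) ℝ) *
      diagonal ((RCLike.ofReal : ℝ → ℝ) ∘ Real.sqrt ∘ hA.1.eigenvalues) * (star U : Matrix (Fin k) (Fin k) ℝ))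
      = (U : Matrix (Fin k) (Fin k) ℝ) * (diagonal ((RCLike.ofReal : ℝ → ℝ) ∘ Real.sqrt ∘ hA.1.eigenvalues) *
      ((star U : Matrix (Fin k) (Fin k) ℝ) * (U : Matrix (Fin k) (Fin k) ℝ)) *
      diagonal ((RCLike.ofReal : ℝ → ℝ) ∘ Real.sqrt ∘ hA.1.eigenvalues)) * (star U : Matrix (Fin k) (Fin k) ℝ) by
      simp only [Matrix.mul_assoc], hU, Matrix.mul_one, diagonal_mul_diagonal]
  conv_rhs => rw [hA.1.spectral_theorem, Unitary.conjStarAlgAut_apply]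
  congr 3
  ext i
  simp [Real.mul_self_sqrt (hA.eigenvalues_nonneg i)]

lemma frobNorm_eq_trace {m n : ℕ} (A : Matrix (Fin m) (Fin n) ℝ) :
    frobNorm A = Real.sqrt ((Aᵀ * A).trace) := by
  rw [frobNorm, Matrix.trace]
  congr 1
  rw [Finset.sum_comm]
  simp [Matrix.diag, Matrix.mul_apply, pow_two, Matrix.transpose_apply]

-- trace of PSD-sandwich bound
lemma trace_mul_le_trace {k : ℕ} (R M : Matrix (Fin k) (Fin k) ℝ)
    (hR : R.PosSemidef) (hM : ∀ t : Fin k → ℝ, t ⬝ᵥ (M *ᵥ t) ≤ t ⬝ᵥ t) :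
    (R * M).trace ≤ R.trace := by
  set T := hR.sqrt with hT
  have hTsymm : Tᵀ = T := hR.posSemidef_sqrt.isHermitian
  have hTT : T * T = R := hR.sqrt_mul_self
  have hsym : ∀ a b, T a b = T b a := fun a b => by
    have := congrFun (congrFun hTsymm b) a
    simpa [Matrix.transpose_apply] using this
  have key : (R * M).trace = (T * M * T).trace := by
    rw [← hTT, ← Matrix.trace_mul_cycle]
  rw [key, ← hTT]
  rw [Matrix.trace, Matrix.trace]
  apply Finset.sum_le_sum
  intro i _
  have hL : (T * M * T).diag i = (fun j => T j i) ⬝ᵥ (M *ᵥ (fun j => T j i)) := by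
    simp only [Matrix.diag, Matrix.mul_apply, dotProduct, Matrix.mulVec, dotProduct,
      Finset.sum_mul, Finset.mul_sum]
    rw [Finset.sum_comm]
    refine Finset.sum_congr rfl fun a _ => Finset.sum_congr rfl fun b _ => ?_
    rw [hsym i a]; ring
  have hRdiag : (T * T).diag i = (fun j => T j i) ⬝ᵥ (fun j => T j i) := by
    simp only [Matrix.diag, Matrix.mul_apply, dotProduct]
    refine Finset.sum_congr rfl fun a _ => ?_
    rw [hsym i a]
  rw [hL, hRdiag]
  exact hM _

lemma mulVec_norm_eq {p k : ℕ} (A : Matrix (Fin p) (Fin k) ℝ)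
    (hA : Aᵀ * A = 1) (t : Fin k → ℝ) : (A *ᵥ t) ⬝ᵥ (A *ᵥ t) = t ⬝ᵥ t := by
  rw [Matrix.dotProduct_mulVec, Matrix.vecMul_mulVec, hA, Matrix.vecMul_one]

/-- For a real `p × k` matrix `X` (`p ≥ k`) of full column rank, the
orthogonal polar factor `Q_X = X (XᵀX)^{-1/2}` is a closest point to `X` in the Stiefel
manifold `V(k,p)` in Frobenius norm: for every `Q` with `QᵀQ = I_k`,
`‖X − Q_X‖_F ≤ ‖X − Q‖_F`. -/
theorem polar_factor_closest_stiefel (p k : ℕ) (hpk : k ≤ p)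
    (X : Matrix (Fin p) (Fin k) ℝ) (hX : X.rank = k) :
    ∃ hS : (Xᵀ * X).PosDef,
      ∀ Q : Matrix (Fin p) (Fin k) ℝ, Qᵀ * Q = (1 : Matrix (Fin k) (Fin k) ℝ) →
        frobNorm (X - X * hS.posSemidef.sqrt⁻¹) ≤ frobNorm (X - Q) := by
  -- injectivity of mulVec
  have hinj : ∀ x : Fin k → ℝ, x ≠ 0 → X *ᵥ x ≠ 0 := by
    have hker : LinearMap.ker X.mulVecLin = ⊥ := by
      have h1 := LinearMap.finrank_range_add_finrank_ker X.mulVecLin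
      rw [show Module.finrank ℝ (LinearMap.range X.mulVecLin) = k from hX,
        Module.finrank_pi ℝ, Fintype.card_fin] at h1
      have h2 : Module.finrank ℝ (LinearMap.ker X.mulVecLin) = 0 := by omega
      exact Submodule.finrank_eq_zero.mp h2
    intro x hx hXx
    exact hx (LinearMap.ker_eq_bot.mp hker (by simpa using hXx))
  have hS : (Xᵀ * X).PosDef := by
    refine Matrix.PosDef.of_dotProduct_mulVec_pos ?_ ?_
    · have := Matrix.isHermitian_conjTranspose_mul_self X
      rwa [Matrix.conjTranspose_eq_transpose_of_trivial] at this
    · intro x hx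
      have hv : X *ᵥ x ≠ 0 := hinj x hx
      have : star x ⬝ᵥ ((Xᵀ * X) *ᵥ x) = (X *ᵥ x) ⬝ᵥ (X *ᵥ x) := by
        rw [show (star x : Fin k → ℝ) = x from rfl, ← Matrix.mulVec_mulVec,
          Matrix.dotProduct_mulVec, Matrix.vecMul_transpose]
      rw [this]
      rcases lt_or_eq_of_le (Finset.sum_nonneg fun i _ =>
        mul_self_nonneg ((X *ᵥ x) i) : (0:ℝ) ≤ (X *ᵥ x) ⬝ᵥ (X *ᵥ x)) with h | h
      · exact h
      · exact absurd (dotProduct_self_eq_zero.mp h.symm) hv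
  refine ⟨hS, ?_⟩
  set R := hS.posSemidef.sqrt with hRdef
  have hRsymm : Rᵀ = R := hS.posSemidef.posSemidef_sqrt.isHermitian
  have hRR : R * R = Xᵀ * X := hS.posSemidef.sqrt_mul_self
  have hRunit : IsUnit R.det := by
    have hdet : R.det * R.det = (Xᵀ * X).det := by rw [← Matrix.det_mul, hRR]
    have hpos : 0 < (Xᵀ * X).det := hS.det_pos
    have : R.det ≠ 0 := by
      intro h0; rw [h0, mul_zero] at hdet; exact hpos.ne hdet
    exact this.isUnit
  have hright : R * R⁻¹ = 1 := Matrix.mul_nonsing_inv R hRunit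
  have hleft : R⁻¹ * R = 1 := Matrix.nonsing_inv_mul R hRunit
  have hRinvT : R⁻¹ᵀ = R⁻¹ := by rw [Matrix.transpose_nonsing_inv, hRsymm]
  set QX := X * R⁻¹ with hQXdef
  have h1 : Xᵀ * (X * R⁻¹) = R := by
    rw [← Matrix.mul_assoc, ← hRR, Matrix.mul_assoc, hright, mul_one]
  have hQX : QXᵀ * QX = (1 : Matrix (Fin k) (Fin k) ℝ) := by
    rw [hQXdef, Matrix.transpose_mul, hRinvT, Matrix.mul_assoc, h1, hleft]
  have hXQR : X = QX * R := by rw [hQXdef, Matrix.mul_assoc, hleft, Matrix.mul_one]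
  -- trace expansion
  have expand : ∀ Q : Matrix (Fin p) (Fin k) ℝ, Qᵀ * Q = 1 →
      ((X - Q)ᵀ * (X - Q)).trace
        = (Xᵀ * X).trace + (k : ℝ) - 2 * (Xᵀ * Q).trace := by
    intro Q hQ
    have hexp : (X - Q)ᵀ * (X - Q) = Xᵀ * X - Xᵀ * Q - Qᵀ * X + Qᵀ * Q := by
      rw [Matrix.transpose_sub, Matrix.sub_mul, Matrix.mul_sub, Matrix.mul_sub]; abel
    have htr : (Qᵀ * X).trace = (Xᵀ * Q).trace := by
      rw [← Matrix.trace_transpose (Qᵀ * X), Matrix.transpose_mul,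
        Matrix.transpose_transpose]
    rw [hexp, Matrix.trace_add, Matrix.trace_sub, Matrix.trace_sub, htr, hQ,
      Matrix.trace_one, Fintype.card_fin]
    ring
  -- trace of X^T QX is trace R
  have htrQX : (Xᵀ * QX).trace = R.trace := by rw [hQXdef, h1]
  intro Q hQ
  -- key inequality: trace (Xᵀ Q) ≤ trace R
  have hkey : (Xᵀ * Q).trace ≤ R.trace := by
    have hXT : Xᵀ * Q = R * (QXᵀ * Q) := by
      rw [hXQR, Matrix.transpose_mul, hRsymm, Matrix.mul_assoc]
    rw [hXT]
    apply trace_mul_le_trace _ _ hS.posSemidef.posSemidef_sqrt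
    intro t
    have ht : (QXᵀ * Q) *ᵥ t = QXᵀ *ᵥ (Q *ᵥ t) := (Matrix.mulVec_mulVec _ _ _).symm
    have hdp : t ⬝ᵥ ((QXᵀ * Q) *ᵥ t) = (QX *ᵥ t) ⬝ᵥ (Q *ᵥ t) := by
      rw [ht, Matrix.dotProduct_mulVec, Matrix.vecMul_transpose]
    rw [hdp]
    set u := QX *ᵥ t
    set v := Q *ᵥ t
    have hu : u ⬝ᵥ u = t ⬝ᵥ t := mulVec_norm_eq QX hQX t
    have hv : v ⬝ᵥ v = t ⬝ᵥ t := mulVec_norm_eq Q hQ t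
    have hc : (0:ℝ) ≤ t ⬝ᵥ t := Finset.sum_nonneg fun i _ => mul_self_nonneg _
    have hcs : (u ⬝ᵥ v) ^ 2 ≤ (t ⬝ᵥ t) ^ 2 := by
      have := Finset.sum_mul_sq_le_sq_mul_sq Finset.univ u v
      calc (u ⬝ᵥ v) ^ 2 ≤ (∑ i, u i ^ 2) * (∑ i, v i ^ 2) := this
        _ = (t ⬝ᵥ t) ^ 2 := by
            rw [show (∑ i, u i ^ 2) = u ⬝ᵥ u by simp [dotProduct, pow_two],
              show (∑ i, v i ^ 2) = v ⬝ᵥ v by simp [dotProduct, pow_two], hu, hv, pow_two]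
    calc u ⬝ᵥ v ≤ |u ⬝ᵥ v| := le_abs_self _
      _ = Real.sqrt ((u ⬝ᵥ v) ^ 2) := (Real.sqrt_sq_eq_abs _).symm
      _ ≤ Real.sqrt ((t ⬝ᵥ t) ^ 2) := Real.sqrt_le_sqrt hcs
      _ = t ⬝ᵥ t := by rw [Real.sqrt_sq_eq_abs, abs_of_nonneg hc]
  rw [frobNorm_eq_trace, frobNorm_eq_trace]
  apply Real.sqrt_le_sqrt
  rw [expand _ hQX, expand _ hQ]
  linarith [htrQX ▸ hkey]
end

section
/- Let ρ > 0, let p ≥ 1, and let t_1, …, t_p be distinct real numbers. Then the p×p matrix K with entries K_{ij} = exp(−(t_i − t_j)²/ρ²) (the squared exponential covariance kernel matrix) is symmetric positive definite. -/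
open Matrix

/-- For `ρ > 0`, `p ≥ 1`, and distinct real numbers `t_1, …, t_p`, the
`p × p` squared exponential kernel matrix `K` with entries
`K_{ij} = exp(−(t_i − t_j)²/ρ²)` is symmetric positive definite. -/
theorem squared_exponential_kernel_posDef (p : ℕ) (hp : 1 ≤ p) (ρ : ℝ) (hρ : 0 < ρ)
    (t : Fin p → ℝ) (ht : Function.Injective t) :
    Matrix.PosDef (Matrix.of fun i j : Fin p => Real.exp (-(t i - t j) ^ 2 / ρ ^ 2)) := by
  have hρ2 : (0:ℝ) < ρ ^ 2 := by positivity
  rw [Matrix.posDef_iff_dotProduct_mulVec]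
  constructor
  · -- symmetry
    ext i j
    simp only [Matrix.conjTranspose_apply, Matrix.of_apply, star_trivial]
    congr 1
    ring
  · intro x hx
    set c : Fin p → ℝ := fun i => x i * Real.exp (-(t i) ^ 2 / ρ ^ 2) with hc
    set s : ℕ → ℝ := fun n => ∑ i, c i * t i ^ n with hs
    -- the per-pair summand
    set g : Fin p → Fin p → ℕ → ℝ :=
      fun i j n => c i * c j * ((2 / ρ ^ 2) ^ n / (n.factorial : ℝ)) * (t i ^ n * t j ^ n)
      with hg
    have hpow : ∀ (i j : Fin p) (n : ℕ),
        (2 * t i * t j / ρ ^ 2) ^ n = (2 / ρ ^ 2) ^ n * (t i ^ n * t j ^ n) := by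
      intro i j n
      rw [show (2 * t i * t j / ρ ^ 2) = (2 / ρ ^ 2) * t i * t j by ring, mul_pow, mul_pow]
      ring
    have hgsum : ∀ i j : Fin p, Summable (g i j) := by
      intro i j
      have : g i j = fun n => (c i * c j) * ((2 * t i * t j / ρ ^ 2) ^ n / (n.factorial : ℝ)) := by
        funext n
        simp only [hg, hpow i j n]
        ring
      rw [this]
      exact (Real.summable_pow_div_factorial _).mul_left _
    -- entrywise expansion
    have hentry : ∀ i j : Fin p,
        x i * (Real.exp (-(t i - t j) ^ 2 / ρ ^ 2) * x j) = ∑' n : ℕ, g i j n := by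
      intro i j
      have hexp : Real.exp (2 * t i * t j / ρ ^ 2)
          = ∑' n : ℕ, (2 * t i * t j / ρ ^ 2) ^ n / (n.factorial : ℝ) := by
        rw [Real.exp_eq_exp_ℝ, NormedSpace.exp_eq_tsum_div]
      have hsplit : (-(t i - t j) ^ 2 / ρ ^ 2)
          = (-(t i) ^ 2 / ρ ^ 2) + (-(t j) ^ 2 / ρ ^ 2) + (2 * t i * t j / ρ ^ 2) := by
        field_simp
        ring
      have key : x i * (Real.exp (-(t i - t j) ^ 2 / ρ ^ 2) * x j)
          = (c i * c j) * Real.exp (2 * t i * t j / ρ ^ 2) := by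
        rw [hsplit, Real.exp_add, Real.exp_add]
        simp only [hc]
        ring
      rw [key, hexp, ← tsum_mul_left]
      apply tsum_congr
      intro n
      simp only [hg, hpow i j n]
      ring
    -- double sum identity
    have hdouble : ∀ n : ℕ, (∑ i, ∑ j, g i j n)
        = ((2 / ρ ^ 2) ^ n / (n.factorial : ℝ)) * s n ^ 2 := by
      intro n
      have h1 : ∀ i : Fin p, (∑ j, g i j n)
          = (c i * t i ^ n * ((2 / ρ ^ 2) ^ n / (n.factorial : ℝ))) * s n := by
        intro i
        simp only [hs, Finset.mul_sum]
        apply Finset.sum_congr rfl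
        intro j _
        simp only [hg]
        ring
      simp only [h1]
      rw [← Finset.sum_mul, ← Finset.sum_mul]
      simp only [hs]
      ring
    -- the quadratic form as a series
    set F : ℕ → ℝ := fun n => ((2 / ρ ^ 2) ^ n / (n.factorial : ℝ)) * s n ^ 2 with hF
    have hQ : dotProduct (star x) ((Matrix.of fun i j : Fin p =>
        Real.exp (-(t i - t j) ^ 2 / ρ ^ 2)) *ᵥ x) = ∑' n : ℕ, F n := by
      have h1 : dotProduct (star x) ((Matrix.of fun i j : Fin p =>
          Real.exp (-(t i - t j) ^ 2 / ρ ^ 2)) *ᵥ x)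
          = ∑ i, ∑ j, x i * (Real.exp (-(t i - t j) ^ 2 / ρ ^ 2) * x j) := by
        simp [dotProduct, Matrix.mulVec, Finset.mul_sum]
      rw [h1]
      have h2 : ∀ i : Fin p, (∑ j, x i * (Real.exp (-(t i - t j) ^ 2 / ρ ^ 2) * x j))
          = ∑' n : ℕ, ∑ j, g i j n := by
        intro i
        rw [Summable.tsum_finsetSum (fun j _ => hgsum i j)]
        exact Finset.sum_congr rfl fun j _ => hentry i j
      calc ∑ i, ∑ j, x i * (Real.exp (-(t i - t j) ^ 2 / ρ ^ 2) * x j)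
          = ∑ i, ∑' n : ℕ, ∑ j, g i j n := Finset.sum_congr rfl fun i _ => h2 i
        _ = ∑' n : ℕ, ∑ i, ∑ j, g i j n :=
            (Summable.tsum_finsetSum (fun i _ => summable_sum fun j _ => hgsum i j)).symm
        _ = ∑' n : ℕ, F n := tsum_congr fun n => hdouble n
    rw [hQ]
    have hFsum : Summable F := by
      have hFeq : F = fun n => ∑ i, ∑ j, g i j n := by
        funext n
        exact (hdouble n).symm
      rw [hFeq]
      exact summable_sum fun i _ => summable_sum fun j _ => hgsum i j
    have hFnonneg : ∀ n, 0 ≤ F n := by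
      intro n
      apply mul_nonneg _ (sq_nonneg _)
      positivity
    -- find n₀ with s n₀ ≠ 0
    have hexists : ∃ n : ℕ, s n ≠ 0 := by
      by_contra h
      push_neg at h
      have hc0 : c = 0 := by
        apply Matrix.eq_zero_of_forall_pow_sum_mul_pow_eq_zero ht
        intro i
        exact h (i : ℕ)
      apply hx
      funext i
      have hci := congrFun hc0 i
      simp only [hc, Pi.zero_apply] at hci
      have hexp : Real.exp (-(t i) ^ 2 / ρ ^ 2) ≠ 0 := (Real.exp_pos _).ne'
      exact (mul_eq_zero.mp hci).resolve_right hexp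
    obtain ⟨n₀, hn₀⟩ := hexists
    have hFpos : 0 < F n₀ := by
      have h1 : (0:ℝ) < (2 / ρ ^ 2) ^ n₀ / (n₀.factorial : ℝ) := by positivity
      exact mul_pos h1 (pow_two_pos_of_ne_zero hn₀)
    exact Summable.tsum_pos hFsum hFnonneg n₀ hFpos
end

section
/- (Eckart–Young, Frobenius norm) Let Y be a real n×p matrix with singular value decomposition Y = U D Vᵀ, where U ∈ ℝ^{n×n} and V ∈ ℝ^{p×p} are orthogonal and D is diagonal with diagonal entries d_1 ≥ d_2 ≥ … ≥ d_{min(n,p)} ≥ 0. For k ≤ min(n,p), let Ŷ_k = U D_k Vᵀ, where D_k keeps the first k diagonal entries of D and sets the rest to zero. Then for every real n×p matrix B with rank(B) ≤ k, ‖Y − Ŷ_k‖_F ≤ ‖Y − B‖_F; that is, the truncated SVD is a best rank-k approximation to Y in Frobenius norm. -/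
open Matrix
open scoped RealInnerProductSpace

/-! ### Auxiliary definitions and lemmas -/

/-- The (squared) Frobenius quantity `∑ i, ∑ j, A i j ^ 2`. -/
noncomputable def sqF {m n : ℕ} (A : Matrix (Fin m) (Fin n) ℝ) : ℝ := ∑ i, ∑ j, (A i j) ^ 2

lemma sqF_nonneg {m n : ℕ} (A : Matrix (Fin m) (Fin n) ℝ) : 0 ≤ sqF A := by
  apply Finset.sum_nonneg; intro i _; apply Finset.sum_nonneg; intro j _; positivity

lemma sqF_eq_trace {m n : ℕ} (A : Matrix (Fin m) (Fin n) ℝ) :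
    sqF A = Matrix.trace (Aᵀ * A) := by
  rw [Matrix.trace, sqF, Finset.sum_comm]
  simp [Matrix.diag, Matrix.mul_apply, sq]

lemma sqF_orth {n p : ℕ} (A : Matrix (Fin n) (Fin p) ℝ)
    (U : Matrix (Fin n) (Fin n) ℝ) (V : Matrix (Fin p) (Fin p) ℝ)
    (hU₁ : Uᵀ * U = 1) (hV₁ : Vᵀ * V = 1) :
    sqF (U * A * Vᵀ) = sqF A := by
  rw [sqF_eq_trace, sqF_eq_trace]
  have : (U * A * Vᵀ)ᵀ * (U * A * Vᵀ) = V * ((Aᵀ * A) * Vᵀ) := by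
    simp only [Matrix.transpose_mul, Matrix.transpose_transpose, Matrix.mul_assoc]
    rw [← Matrix.mul_assoc Uᵀ U, hU₁, Matrix.one_mul]
  rw [this, Matrix.trace_mul_comm, Matrix.mul_assoc (Aᵀ * A) Vᵀ V, hV₁, Matrix.mul_one]

lemma sqF_pythagoras {n p : ℕ} (P : Matrix (Fin n) (Fin n) ℝ) (M : Matrix (Fin n) (Fin p) ℝ)
    (hsym : Pᵀ = P) (hidem : P * P = P) :
    sqF M = sqF (P * M) + sqF ((1 - P) * M) := by
  have h1 : (P * M)ᵀ * (P * M) = Mᵀ * (P * M) := by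
    rw [Matrix.transpose_mul, Matrix.mul_assoc, hsym, ← Matrix.mul_assoc P P M, hidem]
  have h2 : ((1 - P) * M)ᵀ * ((1 - P) * M) = Mᵀ * ((1 - P) * M) := by
    have hsym' : (1 - P)ᵀ = 1 - P := by rw [Matrix.transpose_sub, Matrix.transpose_one, hsym]
    have hidem' : (1 - P) * (1 - P) = 1 - P := by
      rw [Matrix.sub_mul, Matrix.mul_sub, Matrix.mul_sub, hidem]
      simp [Matrix.one_mul, Matrix.mul_one]
    rw [Matrix.transpose_mul, Matrix.mul_assoc, hsym',
      ← Matrix.mul_assoc (1 - P) (1 - P) M, hidem']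
  rw [sqF_eq_trace, sqF_eq_trace, sqF_eq_trace, h1, h2, ← Matrix.trace_add]
  congr 1
  rw [← Matrix.mul_add, ← Matrix.add_mul]
  simp

/-! ### Orthogonal projection matrices -/

/-- The matrix of the orthogonal projection onto a subspace of `EuclideanSpace ℝ (Fin n)`. -/
noncomputable def projMat {n : ℕ} (S : Submodule ℝ (EuclideanSpace ℝ (Fin n))) :
    Matrix (Fin n) (Fin n) ℝ :=
  fun i j => (S.orthogonalProjection (EuclideanSpace.single j 1) : EuclideanSpace ℝ (Fin n)) i

lemma euclid_decomp {n : ℕ} (x : EuclideanSpace ℝ (Fin n)) :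
    x = ∑ j, x j • EuclideanSpace.single j (1:ℝ) := by
  ext m
  simp [EuclideanSpace.single_apply, PiLp.smul_apply, Pi.single_apply]

lemma projMat_mulVec {n : ℕ} (S : Submodule ℝ (EuclideanSpace ℝ (Fin n))) (x : Fin n → ℝ)
    (i : Fin n) :
    (projMat S).mulVec x i = (S.orthogonalProjection (WithLp.toLp 2 x) : EuclideanSpace ℝ (Fin n)) i := by
  conv_rhs => rw [euclid_decomp (WithLp.toLp 2 x)]
  simp only [map_sum, _root_.map_smul, mulVec, dotProduct, projMat]
  rw [Submodule.coe_sum, WithLp.ofLp_sum, Finset.sum_apply]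
  simp [mul_comm]

lemma projMat_symm {n : ℕ} (S : Submodule ℝ (EuclideanSpace ℝ (Fin n))) :
    (projMat S)ᵀ = projMat S := by
  ext i j
  have h := Submodule.inner_starProjection_left_eq_right (𝕜 := ℝ) S
    (EuclideanSpace.single i 1) (EuclideanSpace.single j 1)
  simp only [EuclideanSpace.inner_single_left, EuclideanSpace.inner_single_right,
    _root_.map_one, one_mul, mul_one] at h
  simpa [projMat, transpose_apply] using h

lemma projMat_idem {n : ℕ} (S : Submodule ℝ (EuclideanSpace ℝ (Fin n))) :
    projMat S * projMat S = projMat S := by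
  ext i j
  have : (projMat S * projMat S) i j
      = (projMat S).mulVec (fun m => projMat S m j) i := by
    simp [Matrix.mul_apply, mulVec, dotProduct]
  rw [this, projMat_mulVec]
  have hcol : (fun m => projMat S m j) =
      ((S.orthogonalProjection (EuclideanSpace.single j 1) : EuclideanSpace ℝ (Fin n))) := rfl
  rw [hcol]
  rw [WithLp.toLp_ofLp, Submodule.orthogonalProjectionOnto_mem_subspace_eq_self]
  rfl

lemma projMat_fix {n : ℕ} (S : Submodule ℝ (EuclideanSpace ℝ (Fin n)))
    (y : Fin n → ℝ) (hy : WithLp.toLp 2 y ∈ S) (i : Fin n) :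
    (projMat S).mulVec y i = y i := by
  rw [projMat_mulVec, ← Submodule.starProjection_apply, Submodule.starProjection_eq_self_iff.mpr hy]

lemma projMat_diag {n : ℕ} (S : Submodule ℝ (EuclideanSpace ℝ (Fin n))) (i : Fin n) :
    projMat S i i =
      ‖((S.orthogonalProjection (EuclideanSpace.single i (1:ℝ))) : EuclideanSpace ℝ (Fin n))‖^2 := by
  set u : EuclideanSpace ℝ (Fin n) := EuclideanSpace.single i (1:ℝ) with hu
  set w : EuclideanSpace ℝ (Fin n) := (S.orthogonalProjection u : EuclideanSpace ℝ (Fin n)) with hw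
  have h1 : projMat S i i = inner (𝕜 := ℝ) u w := by
    rw [EuclideanSpace.inner_single_left]; simp [projMat, hu, hw]
  have hz : inner (𝕜 := ℝ) (u - w) w = 0 :=
    Submodule.starProjection_inner_eq_zero u w (SetLike.coe_mem _)
  have h2 : inner (𝕜 := ℝ) u w = inner (𝕜 := ℝ) w w := by
    rw [inner_sub_left] at hz; linarith
  rw [h1, h2, real_inner_self_eq_norm_sq]

lemma projMat_diag_nonneg {n : ℕ} (S : Submodule ℝ (EuclideanSpace ℝ (Fin n))) (i : Fin n) :
    0 ≤ projMat S i i := by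
  rw [projMat_diag]; positivity

lemma projMat_diag_le_one {n : ℕ} (S : Submodule ℝ (EuclideanSpace ℝ (Fin n))) (i : Fin n) :
    projMat S i i ≤ 1 := by
  rw [projMat_diag]
  have hn : ‖(S.orthogonalProjection (EuclideanSpace.single i (1:ℝ)) : EuclideanSpace ℝ (Fin n))‖
      ≤ ‖EuclideanSpace.single i (1:ℝ)‖ := by
    simpa using (S.orthogonalProjection).le_of_opNorm_le (Submodule.orthogonalProjectionOnto_norm_le S)
      (EuclideanSpace.single i (1:ℝ))
  have h1 : ‖EuclideanSpace.single i (1:ℝ)‖ = 1 := by simp [EuclideanSpace.norm_single]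
  nlinarith [norm_nonneg (S.orthogonalProjection (EuclideanSpace.single i (1:ℝ)) : EuclideanSpace ℝ (Fin n))]

lemma projMat_trace {n : ℕ} (S : Submodule ℝ (EuclideanSpace ℝ (Fin n))) :
    Matrix.trace (projMat S) = (Module.finrank ℝ S : ℝ) := by
  classical
  set f : EuclideanSpace ℝ (Fin n) →ₗ[ℝ] EuclideanSpace ℝ (Fin n) :=
    S.subtype ∘ₗ (S.orthogonalProjection : EuclideanSpace ℝ (Fin n) →ₗ[ℝ] S)
  have hb : LinearMap.trace ℝ _ f = (Module.finrank ℝ S : ℝ) := by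
    rw [LinearMap.trace_comp_comm']
    have : (S.orthogonalProjection : EuclideanSpace ℝ (Fin n) →ₗ[ℝ] S) ∘ₗ S.subtype
        = LinearMap.id := by
      ext x
      simp [Submodule.orthogonalProjectionOnto_mem_subspace_eq_self]
    rw [this, LinearMap.trace_id]
  have hm : LinearMap.toMatrix (EuclideanSpace.basisFun (Fin n) ℝ).toBasis
      (EuclideanSpace.basisFun (Fin n) ℝ).toBasis f = projMat S := by
    ext i j
    rw [LinearMap.toMatrix_apply]
    simp [f, projMat, EuclideanSpace.basisFun_apply]
  rw [← hm, ← LinearMap.trace_eq_matrix_trace] at *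
  exact hb

/-! ### Column space -/

/-- The column space of a matrix, as a subspace of `EuclideanSpace`. -/
noncomputable def colSpace {n p : ℕ} (C : Matrix (Fin n) (Fin p) ℝ) :
    Submodule ℝ (EuclideanSpace ℝ (Fin n)) :=
  Submodule.map ((WithLp.linearEquiv 2 ℝ (Fin n → ℝ)).symm : (Fin n → ℝ) →ₗ[ℝ] EuclideanSpace ℝ (Fin n)) (LinearMap.range C.mulVecLin)

lemma colSpace_finrank {n p : ℕ} (C : Matrix (Fin n) (Fin p) ℝ) :
    Module.finrank ℝ (colSpace C) = C.rank := by
  exact (LinearEquiv.finrank_map_eq (WithLp.linearEquiv 2 ℝ (Fin n → ℝ)).symm _).trans rfl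

lemma col_mem_colSpace {n p : ℕ} (C : Matrix (Fin n) (Fin p) ℝ) (j : Fin p) :
    WithLp.toLp 2 (fun m => C m j : Fin n → ℝ) ∈ colSpace C := by
  refine ⟨C.mulVec (Pi.single j 1), ⟨Pi.single j 1, rfl⟩, ?_⟩
  show WithLp.toLp 2 (C.mulVec (Pi.single j 1)) = WithLp.toLp 2 _
  congr 1
  funext m
  simp [Matrix.mulVec_single]

/-! ### Weighted sum lemma -/

lemma weight_lemma (m k : ℕ) (hk : k ≤ m) (d w : ℕ → ℝ)
    (hd_mono : ∀ a b : ℕ, a ≤ b → b < m → d b ≤ d a)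
    (hd_nonneg : ∀ j, j < m → 0 ≤ d j)
    (hw0 : ∀ j, j < m → 0 ≤ w j) (hw1 : ∀ j, j < m → w j ≤ 1)
    (hws : ∑ j ∈ Finset.range m, w j ≤ (k : ℝ)) :
    ∑ j ∈ Finset.range m, w j * d j ^ 2 ≤ ∑ j ∈ Finset.range k, d j ^ 2 := by
  rcases Nat.eq_zero_or_pos k with hk0 | hk0
  · subst hk0
    simp only [Finset.range_zero, Finset.sum_empty]
    have hz : ∀ j ∈ Finset.range m, w j = 0 := by
      intro j hj
      have := Finset.sum_nonneg (fun i (hi : i ∈ Finset.range m) =>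
        hw0 i (Finset.mem_range.mp hi))
      have h1 : ∑ j ∈ Finset.range m, w j = 0 := le_antisymm (by simpa using hws) this
      have := (Finset.sum_eq_zero_iff_of_nonneg (fun i hi =>
        hw0 i (Finset.mem_range.mp hi))).mp h1
      exact this j hj
    rw [Finset.sum_congr rfl (fun j hj => by rw [hz j hj, zero_mul])]
    simp
  · set t : ℝ := d (k - 1) ^ 2 with ht
    have hkm : k - 1 < m := lt_of_lt_of_le (Nat.sub_lt hk0 one_pos) hk
    have ht0 : 0 ≤ t := sq_nonneg _
    have key : ∑ j ∈ Finset.range m, w j * d j ^ 2 - ∑ j ∈ Finset.range k, d j ^ 2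
        ≤ t * (∑ j ∈ Finset.range m, w j - k) := by
      rw [← Finset.sum_range_add_sum_Ico (fun j => w j * d j ^ 2) hk,
        ← Finset.sum_range_add_sum_Ico w hk]
      have h1 : ∑ j ∈ Finset.range k, (w j * d j ^ 2 - d j ^ 2)
          ≤ ∑ j ∈ Finset.range k, (w j - 1) * t := by
        apply Finset.sum_le_sum
        intro j hj
        rw [Finset.mem_range] at hj
        have hjm : j < m := lt_of_lt_of_le hj hk
        have hdj : t ≤ d j ^ 2 := by
          have h := hd_mono j (k-1) (by omega) hkm
          have := hd_nonneg (k-1) hkm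
          nlinarith
        have hw := hw1 j hjm
        nlinarith
      have h2 : ∑ j ∈ Finset.Ico k m, w j * d j ^ 2 ≤ ∑ j ∈ Finset.Ico k m, w j * t := by
        apply Finset.sum_le_sum
        intro j hj
        rw [Finset.mem_Ico] at hj
        have hdj : d j ^ 2 ≤ t := by
          have h := hd_mono (k-1) j (by omega) hj.2
          have := hd_nonneg j hj.2
          nlinarith
        exact mul_le_mul_of_nonneg_left hdj (hw0 j hj.2)
      have e1 : ∑ j ∈ Finset.range k, (w j - 1) * t
          = (∑ j ∈ Finset.range k, w j) * t - k * t := by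
        rw [Finset.sum_congr rfl (fun j _ => sub_mul (w j) 1 t), Finset.sum_sub_distrib,
          ← Finset.sum_mul]
        simp
      have e2 : ∑ j ∈ Finset.Ico k m, w j * t = (∑ j ∈ Finset.Ico k m, w j) * t := by
        rw [Finset.sum_mul]
      rw [Finset.sum_sub_distrib, e1] at h1
      rw [e2] at h2
      nlinarith [h1, h2]
    have hfin : t * (∑ j ∈ Finset.range m, w j - k) ≤ 0 :=
      mul_nonpos_of_nonneg_of_nonpos ht0 (by linarith)
    linarith

/-! ### Sums against (rectangular) diagonal matrices -/

lemma sum_sq_col {n : ℕ} (Q : Matrix (Fin n) (Fin n) ℝ) (hsym : Qᵀ = Q)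
    (hidem : Q * Q = Q) (c : Fin n) : ∑ i, Q i c ^ 2 = Q c c := by
  have h : (Q * Q) c c = ∑ i, Q i c ^ 2 := by
    rw [Matrix.mul_apply]
    apply Finset.sum_congr rfl
    intro i _
    have : Q c i = Q i c := by conv_lhs => rw [← hsym, Matrix.transpose_apply]
    rw [this, sq]
  rw [← h, hidem]

lemma sqF_mul_diag {n p : ℕ} (Q : Matrix (Fin n) (Fin n) ℝ)
    (hsym : Qᵀ = Q) (hidem : Q * Q = Q)
    (d : ℕ → ℝ) (D : Matrix (Fin n) (Fin p) ℝ)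
    (hD : ∀ (i : Fin n) (j : Fin p), D i j = if (i : ℕ) = (j : ℕ) then d i else 0)
    (w : ℕ → ℝ) (hw : ∀ i : Fin n, w (i : ℕ) = Q i i) :
    sqF (Q * D) = ∑ j ∈ Finset.range (min n p), w j * d j ^ 2 := by
  have hentry : ∀ (i : Fin n) (j : Fin p), (Q * D) i j =
      if h : (j : ℕ) < n then Q i ⟨(j : ℕ), h⟩ * d j else 0 := by
    intro i j
    rw [Matrix.mul_apply]
    by_cases h : (j : ℕ) < n
    · rw [dif_pos h]
      rw [Finset.sum_eq_single (⟨(j : ℕ), h⟩ : Fin n)]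
      · rw [hD]; simp
      · intro m _ hm
        rw [hD, if_neg, mul_zero]
        intro hmj
        exact hm (Fin.ext hmj)
      · simp
    · rw [dif_neg h]
      apply Finset.sum_eq_zero
      intro m _
      rw [hD, if_neg, mul_zero]
      intro hmj
      exact h (hmj ▸ m.isLt)
  have hcol : ∀ j : Fin p, (∑ i, ((Q * D) i j) ^ 2)
      = if (j : ℕ) < n then w (j : ℕ) * d j ^ 2 else 0 := by
    intro j
    by_cases h : (j : ℕ) < n
    · rw [if_pos h]
      have : ∀ i : Fin n, ((Q * D) i j) ^ 2 = Q i ⟨(j:ℕ), h⟩ ^ 2 * d j ^ 2 := by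
        intro i; rw [hentry, dif_pos h, mul_pow]
      rw [Finset.sum_congr rfl (fun i _ => this i), ← Finset.sum_mul,
        sum_sq_col Q hsym hidem, hw ⟨(j:ℕ), h⟩]
    · rw [if_neg h]
      apply Finset.sum_eq_zero
      intro i _
      rw [hentry, dif_neg h]
      simp
  rw [sqF, Finset.sum_comm]
  rw [Finset.sum_congr rfl (fun j (_ : j ∈ Finset.univ) => hcol j)]
  rw [Fin.sum_univ_eq_sum_range (fun j => if j < n then w j * d j ^ 2 else 0) p]
  rw [Finset.sum_ite, Finset.sum_const_zero, add_zero]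
  apply Finset.sum_congr _ (fun _ _ => rfl)
  ext j
  simp only [Finset.mem_filter, Finset.mem_range, Nat.lt_min]
  omega

lemma sqF_diag_tail {n p k : ℕ} (d : ℕ → ℝ) (E : Matrix (Fin n) (Fin p) ℝ)
    (hE : ∀ (i : Fin n) (j : Fin p),
      E i j = if (i : ℕ) = (j : ℕ) ∧ k ≤ (i : ℕ) then d i else 0) :
    sqF E = ∑ j ∈ Finset.Ico k (min n p), d j ^ 2 := by
  have hrow : ∀ i : Fin n, (∑ j, (E i j) ^ 2)
      = if (i : ℕ) < p ∧ k ≤ (i : ℕ) then d i ^ 2 else 0 := by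
    intro i
    by_cases h : (i : ℕ) < p ∧ k ≤ (i : ℕ)
    · rw [if_pos h]
      rw [Finset.sum_eq_single (⟨(i : ℕ), h.1⟩ : Fin p)]
      · rw [hE]; simp [h.2]
      · intro m _ hm
        rw [hE, if_neg, zero_pow two_ne_zero]
        rintro ⟨h1, -⟩
        exact hm (Fin.ext h1.symm)
      · simp
    · rw [if_neg h]
      apply Finset.sum_eq_zero
      intro j _
      rw [hE, if_neg, zero_pow two_ne_zero]
      rintro ⟨h1, h2⟩
      exact h ⟨h1 ▸ j.isLt, h2⟩
  rw [sqF, Finset.sum_congr rfl (fun i (_ : i ∈ Finset.univ) => hrow i)]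
  rw [Fin.sum_univ_eq_sum_range (fun i => if i < p ∧ k ≤ i then d i ^ 2 else 0) n]
  rw [Finset.sum_ite, Finset.sum_const_zero, add_zero]
  apply Finset.sum_congr _ (fun _ _ => rfl)
  ext j
  simp only [Finset.mem_filter, Finset.mem_range, Finset.mem_Ico, Nat.lt_min]
  omega

lemma frobNorm_eq_sqrt_sqF {m n : ℕ} (A : Matrix (Fin m) (Fin n) ℝ) :
    frobNorm A = Real.sqrt (sqF A) := rfl

/-- **Eckart–Young, Frobenius norm.** Let `Y = U D Vᵀ` be a singular value
decomposition of a real `n × p` matrix, with `U`, `V` orthogonal and `D` (rectangular)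
diagonal with nonincreasing nonnegative diagonal entries `d_1 ≥ … ≥ d_{min(n,p)} ≥ 0`.
For `k ≤ min(n,p)`, let `Ŷ_k = U D_k Vᵀ`, where `D_k` keeps the first `k` diagonal
entries of `D` and sets the rest to zero. Then for every real `n × p` matrix `B` of rank
at most `k`, `‖Y − Ŷ_k‖_F ≤ ‖Y − B‖_F`. -/
theorem eckart_young_frobenius (n p k : ℕ) (hk : k ≤ min n p)
    (Y : Matrix (Fin n) (Fin p) ℝ)
    (U : Matrix (Fin n) (Fin n) ℝ) (V : Matrix (Fin p) (Fin p) ℝ)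
    (hU₁ : Uᵀ * U = (1 : Matrix (Fin n) (Fin n) ℝ))
    (hU₂ : U * Uᵀ = (1 : Matrix (Fin n) (Fin n) ℝ))
    (hV₁ : Vᵀ * V = (1 : Matrix (Fin p) (Fin p) ℝ))
    (hV₂ : V * Vᵀ = (1 : Matrix (Fin p) (Fin p) ℝ))
    (d : ℕ → ℝ)
    (hd_mono : ∀ a b : ℕ, a ≤ b → b < min n p → d b ≤ d a)
    (hd_nonneg : ∀ m : ℕ, m < min n p → 0 ≤ d m)
    (D Dk : Matrix (Fin n) (Fin p) ℝ)
    (hD : ∀ (i : Fin n) (j : Fin p), D i j = if (i : ℕ) = (j : ℕ) then d i else 0)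
    (hDk : ∀ (i : Fin n) (j : Fin p),
      Dk i j = if (i : ℕ) = (j : ℕ) ∧ (i : ℕ) < k then d i else 0)
    (hY : Y = U * D * Vᵀ) :
    ∀ B : Matrix (Fin n) (Fin p) ℝ, B.rank ≤ k →
      frobNorm (Y - U * Dk * Vᵀ) ≤ frobNorm (Y - B) := by
  intro B hB
  set m := min n p with hm
  set C : Matrix (Fin n) (Fin p) ℝ := Uᵀ * B * V with hC
  have hCrank : C.rank ≤ k :=
    le_trans (le_trans (Matrix.rank_mul_le_left _ _) (Matrix.rank_mul_le_right _ _)) hB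
  have hBeq : B = U * C * Vᵀ := by
    rw [hC]
    calc B = (U * Uᵀ) * B * (V * Vᵀ) := by rw [hU₂, hV₂, Matrix.one_mul, Matrix.mul_one]
    _ = U * (Uᵀ * B * V) * Vᵀ := by simp only [Matrix.mul_assoc]
  rw [frobNorm_eq_sqrt_sqF, frobNorm_eq_sqrt_sqF]
  apply Real.sqrt_le_sqrt
  have e1 : Y - U * Dk * Vᵀ = U * (D - Dk) * Vᵀ := by
    rw [hY, Matrix.mul_sub, Matrix.sub_mul]
  have e2 : Y - B = U * (D - C) * Vᵀ := by
    rw [hY, hBeq, Matrix.mul_sub, Matrix.sub_mul]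
  rw [e1, e2, sqF_orth _ U V hU₁ hV₁, sqF_orth _ U V hU₁ hV₁]
  -- projection onto column space of C
  set S := colSpace C with hS
  set P := projMat S with hP
  have hPsym : Pᵀ = P := projMat_symm S
  have hPidem : P * P = P := projMat_idem S
  have hPC : P * C = C := by
    ext i j
    have h0 : (P * C) i j = P.mulVec (fun m => C m j) i := by
      simp [Matrix.mul_apply, mulVec, dotProduct]
    rw [h0, projMat_fix S _ (col_mem_colSpace C j)]
  set Q : Matrix (Fin n) (Fin n) ℝ := 1 - P with hQ
  have hQsym : Qᵀ = Q := by
    rw [hQ, Matrix.transpose_sub, Matrix.transpose_one, hPsym]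
  have hQidem : Q * Q = Q := by
    rw [hQ, Matrix.sub_mul, Matrix.mul_sub, Matrix.mul_sub, hPidem]
    simp [Matrix.one_mul, Matrix.mul_one]
  have hQC : Q * C = 0 := by
    rw [hQ, Matrix.sub_mul, Matrix.one_mul, hPC, sub_self]
  have hQDC : Q * (D - C) = Q * D := by
    rw [Matrix.mul_sub, hQC, sub_zero]
  have hle : sqF (Q * D) ≤ sqF (D - C) := by
    rw [← hQDC]
    have hpy := sqF_pythagoras P (D - C) hPsym hPidem
    have hnn := sqF_nonneg (P * (D - C))
    rw [← hQ] at hpy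
    linarith
  -- weights
  set w : ℕ → ℝ := fun j => if h : j < n then P ⟨j, h⟩ ⟨j, h⟩ else 0 with hw
  have hwi : ∀ i : Fin n, w (i : ℕ) = P i i := by
    intro i; rw [hw]; simp only [dif_pos i.isLt]
  have hqwi : ∀ i : Fin n, (1 : ℝ) - w (i : ℕ) = Q i i := by
    intro i
    rw [hwi, hQ, Matrix.sub_apply, Matrix.one_apply_eq]
  have hQD : sqF (Q * D) = ∑ j ∈ Finset.range m, (1 - w j) * d j ^ 2 :=
    sqF_mul_diag Q hQsym hQidem d D hD (fun j => 1 - w j) hqwi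
  have hE : ∀ (i : Fin n) (j : Fin p),
      (D - Dk) i j = if (i : ℕ) = (j : ℕ) ∧ k ≤ (i : ℕ) then d i else 0 := by
    intro i j
    rw [Matrix.sub_apply, hD, hDk]
    by_cases h1 : (i : ℕ) = (j : ℕ)
    · by_cases h2 : (i : ℕ) < k
      · rw [if_pos h1, if_pos ⟨h1, h2⟩, if_neg (by omega), sub_self]
      · rw [if_pos h1, if_neg (by tauto), if_pos ⟨h1, by omega⟩, sub_zero]
    · rw [if_neg h1, if_neg (by tauto), if_neg (by tauto), sub_zero]
  have hDkv : sqF (D - Dk) = ∑ j ∈ Finset.Ico k m, d j ^ 2 :=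
    sqF_diag_tail d (D - Dk) hE
  -- weight bounds
  have hw_nonneg : ∀ j : ℕ, 0 ≤ w j := by
    intro j
    simp only [hw]
    by_cases h : j < n
    · rw [dif_pos h]; exact projMat_diag_nonneg S _
    · rw [dif_neg h]
  have hw_le_one : ∀ j, j < m → w j ≤ 1 := by
    intro j hj
    have hjn : j < n := lt_of_lt_of_le hj (min_le_left n p)
    simp only [hw]
    rw [dif_pos hjn]
    exact projMat_diag_le_one S _
  have hws : ∑ j ∈ Finset.range m, w j ≤ (k : ℝ) := by
    have hsub : ∑ j ∈ Finset.range m, w j ≤ ∑ j ∈ Finset.range n, w j := by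
      apply Finset.sum_le_sum_of_subset_of_nonneg
      · exact Finset.range_subset_range.mpr (min_le_left n p)
      · intro j _ _; exact hw_nonneg j
    have htr : ∑ j ∈ Finset.range n, w j = Matrix.trace P := by
      rw [Matrix.trace, ← Fin.sum_univ_eq_sum_range w n]
      apply Finset.sum_congr rfl
      intro i _
      rw [hwi]
      rfl
    have htr2 : Matrix.trace P = (C.rank : ℝ) := by
      rw [hP, projMat_trace, hS, colSpace_finrank]
    have : (C.rank : ℝ) ≤ (k : ℝ) := by exact_mod_cast hCrank
    linarith
  have hweight : ∑ j ∈ Finset.range m, w j * d j ^ 2 ≤ ∑ j ∈ Finset.range k, d j ^ 2 :=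
    weight_lemma m k hk d w hd_mono hd_nonneg (fun j _ => hw_nonneg j) hw_le_one hws
  -- final chain
  have hsplit : ∑ j ∈ Finset.range k, d j ^ 2 + ∑ j ∈ Finset.Ico k m, d j ^ 2
      = ∑ j ∈ Finset.range m, d j ^ 2 :=
    Finset.sum_range_add_sum_Ico (fun j => d j ^ 2) hk
  have hexp : ∑ j ∈ Finset.range m, (1 - w j) * d j ^ 2
      = ∑ j ∈ Finset.range m, d j ^ 2 - ∑ j ∈ Finset.range m, w j * d j ^ 2 := by
    rw [← Finset.sum_sub_distrib]
    apply Finset.sum_congr rfl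
    intro j _
    ring
  rw [hDkv]
  calc ∑ j ∈ Finset.Ico k m, d j ^ 2
      = ∑ j ∈ Finset.range m, d j ^ 2 - ∑ j ∈ Finset.range k, d j ^ 2 := by linarith
    _ ≤ ∑ j ∈ Finset.range m, d j ^ 2 - ∑ j ∈ Finset.range m, w j * d j ^ 2 := by linarith
    _ = sqF (Q * D) := by rw [hQD, hexp]
    _ ≤ sqF (D - C) := hle
end
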